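/- The function H satisfies: (i) H(b*_{r+q}, y_l) = 1; (ii) H(y_u, y_u) = 1; (iii) y ↦ H(b*_{r+q}, y) is strictly increasing on (y_l, y_u); (iv) y ↦ H(y, y) is strictly increasing on (y_l, y_u). -/

import Mathlib

open Real Set Filter

noncomputable def gam1 (μ σ ρ : ℝ) : ℝ := Real.sqrt (μ^2/σ^4 + 2*ρ/σ^2) - μ/σ^2

noncomputable def gam2 (μ σ ρ : ℝ) : ℝ := -Real.sqrt (μ^2/σ^4 + 2*ρ/σ^2) - μ/σ^2

/-- The classical optimal dividend boundary `b*_ρ`. -/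
noncomputable def bstar (μ σ ρ : ℝ) : ℝ :=
  Real.log ((gam2 μ σ ρ)^2 / (gam1 μ σ ρ)^2) / (gam1 μ σ ρ - gam2 μ σ ρ)

/-- The classical value function `V_ρ`. -/
noncomputable def Vfun (μ σ ρ x : ℝ) : ℝ :=
  if x < bstar μ σ ρ then
    (Real.exp (gam1 μ σ ρ * x) - Real.exp (gam2 μ σ ρ * x)) /
      (gam1 μ σ ρ * Real.exp (gam1 μ σ ρ * bstar μ σ ρ) -
        gam2 μ σ ρ * Real.exp (gam2 μ σ ρ * bstar μ σ ρ))
  else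
    (Real.exp (gam1 μ σ ρ * bstar μ σ ρ) - Real.exp (gam2 μ σ ρ * bstar μ σ ρ)) /
      (gam1 μ σ ρ * Real.exp (gam1 μ σ ρ * bstar μ σ ρ) -
        gam2 μ σ ρ * Real.exp (gam2 μ σ ρ * bstar μ σ ρ)) + x - bstar μ σ ρ

/-- `δ(y) = e^{γ₁(r+q)y} − e^{γ₂(r+q)y}`. -/
noncomputable def del (μ σ r q y : ℝ) : ℝ :=
  Real.exp (gam1 μ σ (r+q) * y) - Real.exp (gam2 μ σ (r+q) * y)

/-- `δ'(y)`. -/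
noncomputable def delP (μ σ r q y : ℝ) : ℝ :=
  gam1 μ σ (r+q) * Real.exp (gam1 μ σ (r+q) * y) -
    gam2 μ σ (r+q) * Real.exp (gam2 μ σ (r+q) * y)

/-- `δ''(y)`. -/
noncomputable def delPP (μ σ r q y : ℝ) : ℝ :=
  (gam1 μ σ (r+q))^2 * Real.exp (gam1 μ σ (r+q) * y) -
    (gam2 μ σ (r+q))^2 * Real.exp (gam2 μ σ (r+q) * y)

/-- `y_u := b*_{r+q} + μ/r − μ/(r+q)`. -/
noncomputable def yUpper (μ σ r q : ℝ) : ℝ := bstar μ σ (r+q) + μ/r - μ/(r+q)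

/-- `Δ(y)`. -/
noncomputable def DeltaF (μ σ r q y : ℝ) : ℝ :=
  (1/(gam1 μ σ r - gam2 μ σ r)) *
    Real.log ((gam2 μ σ r)^2 * (delP μ σ r q y - gam1 μ σ r * del μ σ r q y) /
      ((gam1 μ σ r)^2 * (delP μ σ r q y - gam2 μ σ r * del μ σ r q y)))

/-- `b*(y) = y + Δ(y)`. -/
noncomputable def bstarY (μ σ r q y : ℝ) : ℝ := y + DeltaF μ σ r q y

noncomputable def psiF (μ σ ρ x : ℝ) : ℝ := Real.exp (gam1 μ σ ρ * x)
noncomputable def phiF (μ σ ρ x : ℝ) : ℝ := Real.exp (gam2 μ σ ρ * x)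
noncomputable def psiP (μ σ ρ x : ℝ) : ℝ := gam1 μ σ ρ * Real.exp (gam1 μ σ ρ * x)
noncomputable def phiP (μ σ ρ x : ℝ) : ℝ := gam2 μ σ ρ * Real.exp (gam2 μ σ ρ * x)

/-- `η(y;b) = ψ'_r(b)φ_r(y) − φ'_r(b)ψ_r(y)`. -/
noncomputable def etaF (μ σ r y b : ℝ) : ℝ :=
  psiP μ σ r b * phiF μ σ r y - phiP μ σ r b * psiF μ σ r y

/-- `η'(y;b)` (derivative in `y`). -/
noncomputable def etaP (μ σ r y b : ℝ) : ℝ :=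
  psiP μ σ r b * phiP μ σ r y - phiP μ σ r b * psiP μ σ r y

/-- `K₁(y)`. -/
noncomputable def K1 (μ σ r q y : ℝ) : ℝ :=
  (psiF μ σ r y * etaP μ σ r y (bstarY μ σ r q y) -
    psiP μ σ r y * etaF μ σ r y (bstarY μ σ r q y)) /
  (psiP μ σ r (bstarY μ σ r q y) *
    (del μ σ r q y * etaP μ σ r y (bstarY μ σ r q y) -
      delP μ σ r q y * etaF μ σ r y (bstarY μ σ r q y)))

/-- `K₂(y) = −K₁(y)`. -/
noncomputable def K2 (μ σ r q y : ℝ) : ℝ := -K1 μ σ r q y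

/-- `K₃(y)`. -/
noncomputable def K3 (μ σ r q y : ℝ) : ℝ :=
  (phiP μ σ r (bstarY μ σ r q y) *
      (del μ σ r q y * psiP μ σ r y - delP μ σ r q y * psiF μ σ r y) +
    del μ σ r q y * etaP μ σ r y (bstarY μ σ r q y) -
      delP μ σ r q y * etaF μ σ r y (bstarY μ σ r q y)) /
  (psiP μ σ r (bstarY μ σ r q y) *
    (del μ σ r q y * etaP μ σ r y (bstarY μ σ r q y) -
      delP μ σ r q y * etaF μ σ r y (bstarY μ σ r q y)))

/-- `K₄(y)`. -/
noncomputable def K4 (μ σ r q y : ℝ) : ℝ :=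
  (psiF μ σ r y * delP μ σ r q y - psiP μ σ r y * del μ σ r q y) /
  (del μ σ r q y * etaP μ σ r y (bstarY μ σ r q y) -
    delP μ σ r q y * etaF μ σ r y (bstarY μ σ r q y))

/-- The candidate value function `w(·;y)` in the subcritical regime. -/
noncomputable def wfun (μ σ r q y x : ℝ) : ℝ :=
  if x < y then
    K1 μ σ r q y * Real.exp (gam1 μ σ (r+q) * x) + K2 μ σ r q y * Real.exp (gam2 μ σ (r+q) * x)
  else if x < bstarY μ σ r q y then
    K3 μ σ r q y * Real.exp (gam1 μ σ r * x) + K4 μ σ r q y * Real.exp (gam2 μ σ r * x)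
  else
    K3 μ σ r q y * Real.exp (gam1 μ σ r * bstarY μ σ r q y) +
      K4 μ σ r q y * Real.exp (gam2 μ σ r * bstarY μ σ r q y) + x - bstarY μ σ r q y

/-- The function `f` characterising the critical level `y_l`. -/
noncomputable def fF (μ σ r q y : ℝ) : ℝ :=
  (-(gam1 μ σ r / gam2 μ σ r) * delP μ σ r q y + gam1 μ σ r * del μ σ r q y) *
    ((gam2 μ σ r)^2/(gam1 μ σ r)^2 *
      ((delP μ σ r q y - gam1 μ σ r * del μ σ r q y) /
        (delP μ σ r q y - gam2 μ σ r * del μ σ r q y)))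
      ^ (gam1 μ σ r / (gam1 μ σ r - gam2 μ σ r))
  - delP μ σ r q (bstar μ σ (r+q))

noncomputable def e1F (μ σ r q b : ℝ) : ℝ :=
  (phiF μ σ (r+q) b - phiP μ σ (r+q) b * Vfun μ σ (r+q) b) /
  (psiP μ σ (r+q) b * phiF μ σ (r+q) b - psiF μ σ (r+q) b * phiP μ σ (r+q) b)

noncomputable def e2F (μ σ r q b : ℝ) : ℝ :=
  (psiP μ σ (r+q) b * Vfun μ σ (r+q) b - psiF μ σ (r+q) b) /
  (psiP μ σ (r+q) b * phiF μ σ (r+q) b - psiF μ σ (r+q) b * phiP μ σ (r+q) b)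

noncomputable def e3F (μ σ r q b y : ℝ) : ℝ :=
  (e1F μ σ r q b * (phiF μ σ r y * psiP μ σ (r+q) y - phiP μ σ r y * psiF μ σ (r+q) y) +
    e2F μ σ r q b * (phiF μ σ r y * phiP μ σ (r+q) y - phiP μ σ r y * phiF μ σ (r+q) y)) /
  (psiP μ σ r y * phiF μ σ r y - psiF μ σ r y * phiP μ σ r y)

noncomputable def e4F (μ σ r q b y : ℝ) : ℝ :=
  (e1F μ σ r q b * (psiP μ σ r y * psiF μ σ (r+q) y - psiF μ σ r y * psiP μ σ (r+q) y) +
    e2F μ σ r q b * (psiP μ σ r y * phiF μ σ (r+q) y - psiF μ σ r y * phiP μ σ (r+q) y)) /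
  (psiP μ σ r y * phiF μ σ r y - psiF μ σ r y * phiP μ σ r y)

/-- The function `H(b,y)` from the critical regime. -/
noncomputable def Hfun (μ σ r q b y : ℝ) : ℝ :=
  (gam1 μ σ r - gam2 μ σ r) *
    (-gam2 μ σ r / gam1 μ σ r) ^ ((gam1 μ σ r + gam2 μ σ r)/(gam1 μ σ r - gam2 μ σ r)) *
    (e3F μ σ r q b y) ^ (-gam2 μ σ r/(gam1 μ σ r - gam2 μ σ r)) *
    (-e4F μ σ r q b y) ^ (gam1 μ σ r/(gam1 μ σ r - gam2 μ σ r))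

/-- `Λ(b,y) = −e₄(b,y)/e₃(b,y)`. -/
noncomputable def Lamfun (μ σ r q b y : ℝ) : ℝ := -e4F μ σ r q b y / e3F μ σ r q b y

/-- `L(y)`. -/
noncomputable def Lfun (μ σ r q y : ℝ) : ℝ :=
  (1/(gam1 μ σ r - gam2 μ σ r)) *
    Real.log ((gam2 μ σ r)^2/(gam1 μ σ r)^2 * Lamfun μ σ r q y y) - y


/-!
Let `u_b := e₁(b)ψ_{r+q} + e₂(b)φ_{r+q}` (`extV`, with derivative `extVDeriv`), the
`(r+q)`-harmonic function that agrees with `V_{r+q}` to first order at `b`, and write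
`γᵢ = γᵢ(r)`. Dividing the Wronskian formulas for `e₃, e₄` by the exponentials shows that
`H(b,y)` is the weighted geometric mean (`Gfun`)
`G(A, B) = (−γ₂/γ₁)^((γ₁+γ₂)/(γ₁−γ₂)) A^(−γ₂/(γ₁−γ₂)) B^(γ₁/(γ₁−γ₂))` of
`A = u_b' − γ₂u_b` and `B = u_b' − γ₁u_b` at `y`; `G` is homogeneous of degree one.

At `b = b*_{r+q}` we have `u_b = δ/δ'(b*)`, so `H(b*, y) = G(δ' − γ₂δ, δ' − γ₁δ)/δ'(b*)`,
which is `1 + f(y)/δ'(b*)`: this gives (i). On the diagonal `u_y(y) = V_{r+q}(y)` and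
`u_y'(y) = 1`, so `H(y,y) = G(1 − γ₂v, 1 − γ₁v)` with `v = V_{r+q}(y) = μ/(r+q) + y − b*`;
at `y = y_u`, `v = μ/r` and the two arguments become `−γ₂/γ₁` and `−γ₁/γ₂`, whence (ii).

For monotonicity, `(log G(A, B))'` has the sign of `−γ₂A'B + γ₁B'A`. On the diagonal this is
`(γ₁ − γ₂)(−γ₁γ₂)(μ/r − v) > 0`. Along `y ↦ H(b*, y)` it is a quadratic form in
`(e^{γ₁(r+q)y}, e^{γ₂(r+q)y})` whose outer coefficients are positive and negative, so it stays
positive once it is positive at `y = b*`; there `δ''(b*) = 0` reduces it to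
`(γ₁ − γ₂)δ'(b*)(2q/σ²)δ(b*) > 0`.
-/

section Rpow

lemma mul_rpow_mul_mul_rpow_of_add_eq_one {c A B a b : ℝ} (hc : 0 < c) (hA : 0 ≤ A) (hB : 0 ≤ B)
    (hab : a + b = 1) : (c * A) ^ a * (c * B) ^ b = c * (A ^ a * B ^ b) := by
  rw [Real.mul_rpow hc.le hA, Real.mul_rpow hc.le hB,
    show c * (A ^ a * B ^ b) = c ^ (a + b) * (A ^ a * B ^ b) by rw [hab, Real.rpow_one],
    Real.rpow_add hc]
  ring

lemma strictMonoOn_rpow_mul_rpow {s : Set ℝ} (hs : Convex ℝ s) {f g f' g' : ℝ → ℝ} {a b : ℝ}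
    (hf : ∀ x ∈ s, 0 < f x) (hg : ∀ x ∈ s, 0 < g x)
    (hf' : ∀ x ∈ s, HasDerivAt f (f' x) x) (hg' : ∀ x ∈ s, HasDerivAt g (g' x) x)
    (hpos : ∀ x ∈ interior s, 0 < a * f' x * g x + b * g' x * f x) :
    StrictMonoOn (fun x => f x ^ a * g x ^ b) s := by
  have hd : ∀ x ∈ s, HasDerivAt (fun x => f x ^ a * g x ^ b)
      (f x ^ a * g x ^ b / (f x * g x) * (a * f' x * g x + b * g' x * f x)) x := by
    intro x hx
    have hfx := (hf x hx).ne'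
    have hgx := (hg x hx).ne'
    refine (((hf' x hx).rpow_const (Or.inl hfx)).mul
      ((hg' x hx).rpow_const (Or.inl hgx))).congr_deriv ?_
    rw [Real.rpow_sub_one hfx, Real.rpow_sub_one hgx]
    field_simp
  refine strictMonoOn_of_deriv_pos hs (fun x hx => (hd x hx).continuousAt.continuousWithinAt) ?_
  intro x hx
  have hxs := interior_subset hx
  have := Real.rpow_pos_of_pos (hf x hxs) a
  have := Real.rpow_pos_of_pos (hg x hxs) b
  have := hf x hxs
  have := hg x hxs
  rw [(hd x hxs).deriv]
  exact mul_pos (by positivity) (hpos x hx)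

lemma inv_mul_mul_rpow_sq_mul_div {ν P Q β : ℝ} (hν : 0 < ν) (hP : 0 < P) (hQ : 0 ≤ Q) :
    ν⁻¹ * P * (ν ^ 2 * (Q / P)) ^ β = ν ^ (2 * β - 1) * (P ^ (1 - β) * Q ^ β) := by
  rw [Real.mul_rpow (by positivity) (by positivity), Real.div_rpow hQ hP.le,
    ← Real.rpow_natCast, ← Real.rpow_mul hν.le, Real.rpow_sub hν, Real.rpow_sub hP,
    Real.rpow_one, Real.rpow_one]
  push_cast
  field_simp

end Rpow

section Roots

variable {μ σ ρ : ℝ}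

lemma abs_lt_sqrt_gam (hσ : σ ≠ 0) (hρ : 0 < ρ) :
    |μ / σ ^ 2| < Real.sqrt (μ ^ 2 / σ ^ 4 + 2 * ρ / σ ^ 2) := by
  rw [Real.lt_sqrt (abs_nonneg _), sq_abs, div_pow, ← pow_mul]
  have : 0 < 2 * ρ / σ ^ 2 := by positivity
  linarith

lemma gam1_pos (hσ : σ ≠ 0) (hρ : 0 < ρ) : 0 < gam1 μ σ ρ := by
  have := abs_lt_sqrt_gam (μ := μ) hσ hρ
  rw [gam1]
  linarith [le_abs_self (μ / σ ^ 2)]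

lemma gam2_neg (hσ : σ ≠ 0) (hρ : 0 < ρ) : gam2 μ σ ρ < 0 := by
  have := abs_lt_sqrt_gam (μ := μ) hσ hρ
  rw [gam2]
  linarith [neg_abs_le (μ / σ ^ 2)]

lemma gam2_lt_gam1 (hσ : σ ≠ 0) (hρ : 0 < ρ) : gam2 μ σ ρ < gam1 μ σ ρ :=
  (gam2_neg hσ hρ).trans (gam1_pos hσ hρ)

lemma gam1_add_gam2 (μ σ ρ : ℝ) : gam1 μ σ ρ + gam2 μ σ ρ = -(2 * μ / σ ^ 2) := by
  rw [gam1, gam2]; ring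

lemma gam1_mul_gam2 (hσ : σ ≠ 0) (hρ : 0 ≤ ρ) : gam1 μ σ ρ * gam2 μ σ ρ = -(2 * ρ / σ ^ 2) := by
  have h := Real.sq_sqrt (by positivity : (0:ℝ) ≤ μ ^ 2 / σ ^ 4 + 2 * ρ / σ ^ 2)
  rw [gam1, gam2]
  field_simp at h ⊢
  linear_combination -h

lemma gam1_lt_gam1 (hσ : σ ≠ 0) {ρ' : ℝ} (hρ : 0 ≤ ρ) (hρρ' : ρ < ρ') :
    gam1 μ σ ρ < gam1 μ σ ρ' := by
  have : 2 * ρ / σ ^ 2 < 2 * ρ' / σ ^ 2 := by gcongr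
  have := Real.sqrt_lt_sqrt (by positivity)
    (by linarith : μ ^ 2 / σ ^ 4 + 2 * ρ / σ ^ 2 < μ ^ 2 / σ ^ 4 + 2 * ρ' / σ ^ 2)
  rw [gam1, gam1]; linarith

lemma gam2_lt_gam2 (hσ : σ ≠ 0) {ρ' : ℝ} (hρ : 0 ≤ ρ) (hρρ' : ρ < ρ') :
    gam2 μ σ ρ' < gam2 μ σ ρ := by
  have := gam1_lt_gam1 (μ := μ) hσ hρ hρρ'
  linarith [gam1_add_gam2 μ σ ρ, gam1_add_gam2 μ σ ρ']

end Roots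

section Boundary

variable {μ σ ρ : ℝ}

lemma sq_gam1_mul_exp_bstar (hσ : σ ≠ 0) (hρ : 0 < ρ) :
    gam1 μ σ ρ ^ 2 * Real.exp (gam1 μ σ ρ * bstar μ σ ρ) =
      gam2 μ σ ρ ^ 2 * Real.exp (gam2 μ σ ρ * bstar μ σ ρ) := by
  have h1 := gam1_pos (μ := μ) hσ hρ
  have h2 := gam2_neg (μ := μ) hσ hρ
  have hexp : Real.exp ((gam1 μ σ ρ - gam2 μ σ ρ) * bstar μ σ ρ) =
      gam2 μ σ ρ ^ 2 / gam1 μ σ ρ ^ 2 := by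
    rw [bstar, mul_div_cancel₀ _ (by linarith), Real.exp_log (by have := h2.ne; positivity)]
  rw [show gam1 μ σ ρ * bstar μ σ ρ =
      (gam1 μ σ ρ - gam2 μ σ ρ) * bstar μ σ ρ + gam2 μ σ ρ * bstar μ σ ρ by ring,
    Real.exp_add, hexp]
  field_simp

lemma Vfun_of_bstar_le (hσ : σ ≠ 0) (hρ : 0 < ρ) {x : ℝ} (hx : bstar μ σ ρ ≤ x) :
    Vfun μ σ ρ x = μ / ρ + x - bstar μ σ ρ := by
  have h1 := gam1_pos (μ := μ) hσ hρ
  have h2 := gam2_neg (μ := μ) hσ hρ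
  have hE1 := Real.exp_pos (gam1 μ σ ρ * bstar μ σ ρ)
  have hE2 := Real.exp_pos (gam2 μ σ ρ * bstar μ σ ρ)
  have hD : 0 < gam1 μ σ ρ * Real.exp (gam1 μ σ ρ * bstar μ σ ρ) -
      gam2 μ σ ρ * Real.exp (gam2 μ σ ρ * bstar μ σ ρ) := by nlinarith
  rw [Vfun, if_neg (not_lt.mpr hx), sub_left_inj, add_left_inj, div_eq_div_iff hD.ne' hρ.ne']
  have hs := gam1_add_gam2 μ σ ρ
  have hp := gam1_mul_gam2 (μ := μ) hσ hρ.le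
  field_simp at hs hp
  linear_combination (σ ^ 2 / 2) * sq_gam1_mul_exp_bstar (μ := μ) hσ hρ
    + (Real.exp (gam1 μ σ ρ * bstar μ σ ρ) - Real.exp (gam2 μ σ ρ * bstar μ σ ρ)) / 2 * hp
    - (gam1 μ σ ρ * Real.exp (gam1 μ σ ρ * bstar μ σ ρ) -
        gam2 μ σ ρ * Real.exp (gam2 μ σ ρ * bstar μ σ ρ)) / 2 * hs

end Boundary

section Delta

variable {μ σ r q : ℝ}

lemma hasDerivAt_del (μ σ r q y : ℝ) : HasDerivAt (del μ σ r q) (delP μ σ r q y) y := by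
  have h1 := ((hasDerivAt_id' y).const_mul (gam1 μ σ (r + q))).exp
  have h2 := ((hasDerivAt_id' y).const_mul (gam2 μ σ (r + q))).exp
  exact (h1.sub h2).congr_deriv (by rw [delP]; ring)

lemma hasDerivAt_delP (μ σ r q y : ℝ) : HasDerivAt (delP μ σ r q) (delPP μ σ r q y) y := by
  have h1 := ((hasDerivAt_id' y).const_mul (gam1 μ σ (r + q))).exp.const_mul (gam1 μ σ (r + q))
  have h2 := ((hasDerivAt_id' y).const_mul (gam2 μ σ (r + q))).exp.const_mul (gam2 μ σ (r + q))
  exact (h1.sub h2).congr_deriv (by rw [delPP]; ring)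

lemma delPP_eq (μ σ r q y : ℝ) :
    delPP μ σ r q y = (gam1 μ σ (r + q) + gam2 μ σ (r + q)) * delP μ σ r q y -
      gam1 μ σ (r + q) * gam2 μ σ (r + q) * del μ σ r q y := by
  rw [delPP, delP, del]; ring

lemma delPP_bstar (hσ : σ ≠ 0) (hrq : 0 < r + q) : delPP μ σ r q (bstar μ σ (r + q)) = 0 := by
  rw [delPP, sq_gam1_mul_exp_bstar hσ hrq, sub_self]

lemma delP_pos (hσ : σ ≠ 0) (hrq : 0 < r + q) (y : ℝ) : 0 < delP μ σ r q y := by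
  have h1 := gam1_pos (μ := μ) hσ hrq
  have h2 := gam2_neg (μ := μ) hσ hrq
  have := Real.exp_pos (gam1 μ σ (r + q) * y)
  have := Real.exp_pos (gam2 μ σ (r + q) * y)
  rw [delP]; nlinarith

lemma del_bstar_pos (hμ : 0 < μ) (hσ : σ ≠ 0) (hrq : 0 < r + q) :
    0 < del μ σ r q (bstar μ σ (r + q)) := by
  have hODE := delPP_eq μ σ r q (bstar μ σ (r + q))
  rw [delPP_bstar hσ hrq, gam1_add_gam2, gam1_mul_gam2 hσ hrq.le] at hODE
  have hD := delP_pos (μ := μ) hσ hrq (bstar μ σ (r + q))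
  have : 0 < 2 * μ / σ ^ 2 * delP μ σ r q (bstar μ σ (r + q)) := by positivity
  have : 0 < 2 * (r + q) / σ ^ 2 := by positivity
  nlinarith

lemma delP_sub_gam2_mul_del_pos (hσ : σ ≠ 0) (hr : 0 < r) (hq : 0 < q) (y : ℝ) :
    0 < delP μ σ r q y - gam2 μ σ r * del μ σ r q y := by
  have ha1 := gam1_pos (μ := μ) hσ (add_pos hr hq)
  have hg2 := gam2_neg (μ := μ) hσ hr
  have ha2 := gam2_lt_gam2 (μ := μ) hσ hr.le (lt_add_of_pos_right r hq)
  have e1 := Real.exp_pos (gam1 μ σ (r + q) * y)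
  have e2 := Real.exp_pos (gam2 μ σ (r + q) * y)
  rw [delP, del]
  nlinarith [mul_pos (sub_pos.mpr (hg2.trans ha1)) e1, mul_pos (sub_pos.mpr ha2) e2]

lemma delP_sub_gam1_mul_del_pos (hσ : σ ≠ 0) (hr : 0 < r) (hq : 0 < q) (y : ℝ) :
    0 < delP μ σ r q y - gam1 μ σ r * del μ σ r q y := by
  have ha2 := gam2_neg (μ := μ) hσ (add_pos hr hq)
  have hg1 := gam1_pos (μ := μ) hσ hr
  have ha1 := gam1_lt_gam1 (μ := μ) hσ hr.le (lt_add_of_pos_right r hq)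
  have e1 := Real.exp_pos (gam1 μ σ (r + q) * y)
  have e2 := Real.exp_pos (gam2 μ σ (r + q) * y)
  rw [delP, del]
  nlinarith [mul_pos (sub_pos.mpr ha1) e1, mul_pos (sub_pos.mpr (ha2.trans hg1)) e2]

end Delta

noncomputable def extV (μ σ r q b y : ℝ) : ℝ :=
  e1F μ σ r q b * psiF μ σ (r + q) y + e2F μ σ r q b * phiF μ σ (r + q) y

noncomputable def extVDeriv (μ σ r q b y : ℝ) : ℝ :=
  e1F μ σ r q b * psiP μ σ (r + q) y + e2F μ σ r q b * phiP μ σ (r + q) y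

section Matching

variable {μ σ r q : ℝ}

lemma wronskian_ne_zero (hσ : σ ≠ 0) {ρ : ℝ} (hρ : 0 < ρ) (x : ℝ) :
    psiP μ σ ρ x * phiF μ σ ρ x - psiF μ σ ρ x * phiP μ σ ρ x ≠ 0 := by
  have h1 := gam1_pos (μ := μ) hσ hρ
  have h2 := gam2_neg (μ := μ) hσ hρ
  rw [psiP, phiF, psiF, phiP,
    show ∀ a b c d : ℝ, a * c * d - c * (b * d) = (a - b) * (c * d) by intros; ring]
  exact mul_ne_zero (by linarith) (by positivity)

lemma e3F_eq (hσ : σ ≠ 0) (hr : 0 < r) (b y : ℝ) :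
    e3F μ σ r q b y = (gam1 μ σ r - gam2 μ σ r)⁻¹ *
      (Real.exp (-(gam1 μ σ r * y)) * (extVDeriv μ σ r q b y - gam2 μ σ r * extV μ σ r q b y)) := by
  have hW := wronskian_ne_zero (μ := μ) hσ hr y
  have hg : gam1 μ σ r - gam2 μ σ r ≠ 0 :=
    (sub_pos.mpr (gam2_lt_gam1 (μ := μ) hσ hr)).ne'
  rw [e3F, extVDeriv, extV, Real.exp_neg, div_eq_iff hW]
  simp only [psiP, phiF, psiF, phiP] at hW ⊢
  field_simp
  ring

lemma neg_e4F_eq (hσ : σ ≠ 0) (hr : 0 < r) (b y : ℝ) :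
    -e4F μ σ r q b y = (gam1 μ σ r - gam2 μ σ r)⁻¹ *
      (Real.exp (-(gam2 μ σ r * y)) * (extVDeriv μ σ r q b y - gam1 μ σ r * extV μ σ r q b y)) := by
  have hW := wronskian_ne_zero (μ := μ) hσ hr y
  have hg : gam1 μ σ r - gam2 μ σ r ≠ 0 :=
    (sub_pos.mpr (gam2_lt_gam1 (μ := μ) hσ hr)).ne'
  rw [e4F, extVDeriv, extV, Real.exp_neg, neg_eq_iff_eq_neg, div_eq_iff hW]
  simp only [psiP, phiF, psiF, phiP] at hW ⊢
  field_simp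
  ring

lemma extV_self (hσ : σ ≠ 0) (hrq : 0 < r + q) (b : ℝ) :
    extV μ σ r q b b = Vfun μ σ (r + q) b := by
  have hW := wronskian_ne_zero (μ := μ) hσ hrq b
  rw [extV, e1F, e2F, div_mul_eq_mul_div, div_mul_eq_mul_div, ← add_div, div_eq_iff hW]
  ring

lemma extVDeriv_self (hσ : σ ≠ 0) (hrq : 0 < r + q) (b : ℝ) :
    extVDeriv μ σ r q b b = 1 := by
  have hW := wronskian_ne_zero (μ := μ) hσ hrq b
  rw [extVDeriv, e1F, e2F, div_mul_eq_mul_div, div_mul_eq_mul_div, ← add_div,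
    div_eq_iff hW]
  ring

end Matching

section MatchingAtBstar

variable {μ σ r q : ℝ}

lemma Vfun_bstar (μ σ r q : ℝ) :
    Vfun μ σ (r + q) (bstar μ σ (r + q)) =
      del μ σ r q (bstar μ σ (r + q)) / delP μ σ r q (bstar μ σ (r + q)) := by
  rw [Vfun, if_neg (lt_irrefl _), del, delP]; ring

lemma e1F_bstar (hσ : σ ≠ 0) (hrq : 0 < r + q) :
    e1F μ σ r q (bstar μ σ (r + q)) = (delP μ σ r q (bstar μ σ (r + q)))⁻¹ := by
  have hW := wronskian_ne_zero (μ := μ) hσ hrq (bstar μ σ (r + q))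
  have hD := (delP_pos (μ := μ) (q := q) hσ hrq (bstar μ σ (r + q))).ne'
  rw [e1F, Vfun_bstar, div_eq_iff hW]
  field_simp
  rw [del, delP, psiP, phiF, psiF, phiP]
  ring

lemma e2F_bstar (hσ : σ ≠ 0) (hrq : 0 < r + q) :
    e2F μ σ r q (bstar μ σ (r + q)) = -(delP μ σ r q (bstar μ σ (r + q)))⁻¹ := by
  have hW := wronskian_ne_zero (μ := μ) hσ hrq (bstar μ σ (r + q))
  have hD := (delP_pos (μ := μ) (q := q) hσ hrq (bstar μ σ (r + q))).ne'
  rw [e2F, Vfun_bstar, div_eq_iff hW]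
  field_simp
  rw [del, delP, psiP, phiF, psiF, phiP]
  ring

lemma extV_bstar (hσ : σ ≠ 0) (hrq : 0 < r + q) (y : ℝ) :
    extV μ σ r q (bstar μ σ (r + q)) y =
      (delP μ σ r q (bstar μ σ (r + q)))⁻¹ * del μ σ r q y := by
  rw [extV, e1F_bstar hσ hrq, e2F_bstar hσ hrq, psiF, phiF, del]; ring

lemma extVDeriv_bstar (hσ : σ ≠ 0) (hrq : 0 < r + q) (y : ℝ) :
    extVDeriv μ σ r q (bstar μ σ (r + q)) y =
      (delP μ σ r q (bstar μ σ (r + q)))⁻¹ * delP μ σ r q y := by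
  rw [extVDeriv, e1F_bstar hσ hrq, e2F_bstar hσ hrq, psiP, phiP]
  unfold delP; ring

end MatchingAtBstar

noncomputable def Gfun (μ σ r A B : ℝ) : ℝ :=
  (-gam2 μ σ r / gam1 μ σ r) ^ ((gam1 μ σ r + gam2 μ σ r) / (gam1 μ σ r - gam2 μ σ r)) *
    (A ^ (-gam2 μ σ r / (gam1 μ σ r - gam2 μ σ r)) * B ^ (gam1 μ σ r / (gam1 μ σ r - gam2 μ σ r)))

section Gfun

variable {μ σ r q : ℝ}

lemma gam_exponents_add (hσ : σ ≠ 0) (hr : 0 < r) :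
    -gam2 μ σ r / (gam1 μ σ r - gam2 μ σ r) + gam1 μ σ r / (gam1 μ σ r - gam2 μ σ r) = 1 := by
  have hg : gam1 μ σ r - gam2 μ σ r ≠ 0 :=
    (sub_pos.mpr (gam2_lt_gam1 (μ := μ) hσ hr)).ne'
  rw [← add_div, neg_add_eq_sub, div_self hg]

lemma Gfun_mul (hσ : σ ≠ 0) (hr : 0 < r) {c A B : ℝ} (hc : 0 < c) (hA : 0 ≤ A) (hB : 0 ≤ B) :
    Gfun μ σ r (c * A) (c * B) = c * Gfun μ σ r A B := by
  rw [Gfun, Gfun, mul_rpow_mul_mul_rpow_of_add_eq_one hc hA hB (gam_exponents_add hσ hr)]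
  ring

lemma Gfun_neg_div (hσ : σ ≠ 0) (hr : 0 < r) :
    Gfun μ σ r (-gam2 μ σ r / gam1 μ σ r) (-gam1 μ σ r / gam2 μ σ r) = 1 := by
  have hg1 := gam1_pos (μ := μ) hσ hr
  have hg2 := gam2_neg (μ := μ) hσ hr
  have hν : 0 < -gam2 μ σ r / gam1 μ σ r := div_pos (neg_pos.mpr hg2) hg1
  rw [Gfun, show -gam1 μ σ r / gam2 μ σ r = (-gam2 μ σ r / gam1 μ σ r)⁻¹ by
      field_simp,
    Real.inv_rpow hν.le, ← Real.rpow_neg hν.le, ← Real.rpow_add hν, ← Real.rpow_add hν]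
  convert Real.rpow_zero _
  field_simp
  ring

lemma Hfun_eq_Gfun (hσ : σ ≠ 0) (hr : 0 < r) {b y : ℝ}
    (hA : 0 ≤ extVDeriv μ σ r q b y - gam2 μ σ r * extV μ σ r q b y)
    (hB : 0 ≤ extVDeriv μ σ r q b y - gam1 μ σ r * extV μ σ r q b y) :
    Hfun μ σ r q b y = Gfun μ σ r (extVDeriv μ σ r q b y - gam2 μ σ r * extV μ σ r q b y)
      (extVDeriv μ σ r q b y - gam1 μ σ r * extV μ σ r q b y) := by
  have hg : 0 < gam1 μ σ r - gam2 μ σ r :=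
    sub_pos.mpr (gam2_lt_gam1 (μ := μ) hσ hr)
  have hsum := gam_exponents_add (μ := μ) hσ hr
  rw [Hfun, e3F_eq hσ hr, neg_e4F_eq hσ hr, mul_assoc _ (_ ^ _),
    mul_rpow_mul_mul_rpow_of_add_eq_one (inv_pos.mpr hg) (by positivity) (by positivity) hsum,
    Real.mul_rpow (Real.exp_pos _).le hA, Real.mul_rpow (Real.exp_pos _).le hB,
    ← Real.exp_mul, ← Real.exp_mul, Gfun]
  have hexp : Real.exp (-(gam1 μ σ r * y) * (-gam2 μ σ r / (gam1 μ σ r - gam2 μ σ r))) *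
      Real.exp (-(gam2 μ σ r * y) * (gam1 μ σ r / (gam1 μ σ r - gam2 μ σ r))) = 1 := by
    rw [← Real.exp_add, ← Real.exp_zero]
    congr 1
    field_simp
    ring
  rw [mul_mul_mul_comm (Real.exp _) _ (Real.exp _), hexp, one_mul]
  field_simp

end Gfun

section GfunApplications

variable {μ σ r q : ℝ}

lemma fF_eq (hσ : σ ≠ 0) (hr : 0 < r) (hq : 0 < q) (y : ℝ) :
    fF μ σ r q y = Gfun μ σ r (delP μ σ r q y - gam2 μ σ r * del μ σ r q y)
      (delP μ σ r q y - gam1 μ σ r * del μ σ r q y) - delP μ σ r q (bstar μ σ (r + q)) := by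
  have hg1 := gam1_pos (μ := μ) hσ hr
  have hg2 := gam2_neg (μ := μ) hσ hr
  have hg : gam1 μ σ r - gam2 μ σ r ≠ 0 := by linarith
  have hν : 0 < -gam2 μ σ r / gam1 μ σ r := div_pos (neg_pos.mpr hg2) hg1
  have hlin : -(gam1 μ σ r / gam2 μ σ r) * delP μ σ r q y + gam1 μ σ r * del μ σ r q y =
      (-gam2 μ σ r / gam1 μ σ r)⁻¹ * (delP μ σ r q y - gam2 μ σ r * del μ σ r q y) := by
    have := hg2.ne
    field_simp
    ring
  have hsq : gam2 μ σ r ^ 2 / gam1 μ σ r ^ 2 = (-gam2 μ σ r / gam1 μ σ r) ^ 2 := by ring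
  rw [fF, Gfun, hlin, hsq, inv_mul_mul_rpow_sq_mul_div hν
    (delP_sub_gam2_mul_del_pos hσ hr hq y) (delP_sub_gam1_mul_del_pos hσ hr hq y).le]
  congr 3
  · field_simp; ring
  · rw [one_sub_div hg, sub_sub_cancel_left]

lemma strictMonoOn_Gfun (hσ : σ ≠ 0) (hr : 0 < r) {s : Set ℝ} (hs : Convex ℝ s)
    {f g f' g' : ℝ → ℝ} (hf : ∀ x ∈ s, 0 < f x) (hg : ∀ x ∈ s, 0 < g x)
    (hf' : ∀ x ∈ s, HasDerivAt f (f' x) x) (hg' : ∀ x ∈ s, HasDerivAt g (g' x) x)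
    (hpos : ∀ x ∈ interior s, 0 < -gam2 μ σ r * f' x * g x + gam1 μ σ r * g' x * f x) :
    StrictMonoOn (fun x => Gfun μ σ r (f x) (g x)) s := by
  have hg1 := gam1_pos (μ := μ) hσ hr
  have hg2 := gam2_neg (μ := μ) hσ hr
  have hκ : 0 < (-gam2 μ σ r / gam1 μ σ r) ^
      ((gam1 μ σ r + gam2 μ σ r) / (gam1 μ σ r - gam2 μ σ r)) :=
    Real.rpow_pos_of_pos (div_pos (neg_pos.mpr hg2) hg1) _
  refine fun x hx y hy hxy => mul_lt_mul_of_pos_left ?_ hκ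
  refine strictMonoOn_rpow_mul_rpow hs hf hg hf' hg' (fun z hz => ?_) hx hy hxy
  have hdiv : -gam2 μ σ r / (gam1 μ σ r - gam2 μ σ r) * f' z * g z +
      gam1 μ σ r / (gam1 μ σ r - gam2 μ σ r) * g' z * f z =
      (-gam2 μ σ r * f' z * g z + gam1 μ σ r * g' z * f z) / (gam1 μ σ r - gam2 μ σ r) := by ring
  rw [hdiv]
  exact div_pos (hpos z hz) (by linarith)

end GfunApplications

/-- Up to a positive factor, the derivative of `y ↦ H(b*_{r+q}, y)`. -/
noncomputable def Nfun (μ σ r q y : ℝ) : ℝ :=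
  -gam2 μ σ r * (delPP μ σ r q y - gam2 μ σ r * delP μ σ r q y) *
      (delP μ σ r q y - gam1 μ σ r * del μ σ r q y) +
    gam1 μ σ r * (delPP μ σ r q y - gam1 μ σ r * delP μ σ r q y) *
      (delP μ σ r q y - gam2 μ σ r * del μ σ r q y)

section Nfun

variable {μ σ r q : ℝ}

lemma Nfun_bstar_pos (hμ : 0 < μ) (hσ : σ ≠ 0) (hr : 0 < r) (hq : 0 < q) :
    0 < Nfun μ σ r q (bstar μ σ (r + q)) := by
  have hrq := add_pos hr hq
  have hg1 := gam1_pos (μ := μ) hσ hr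
  have hg2 := gam2_neg (μ := μ) hσ hr
  have hD := delP_pos (μ := μ) (q := q) hσ hrq (bstar μ σ (r + q))
  have hδ := del_bstar_pos (q := q) hμ hσ hrq
  have hODE := delPP_eq μ σ r q (bstar μ σ (r + q))
  rw [delPP_bstar hσ hrq, gam1_add_gam2, gam1_mul_gam2 hσ hrq.le] at hODE
  have hkey : gam1 μ σ r * gam2 μ σ r * del μ σ r q (bstar μ σ (r + q)) -
      (gam1 μ σ r + gam2 μ σ r) * delP μ σ r q (bstar μ σ (r + q)) =
      2 * q / σ ^ 2 * del μ σ r q (bstar μ σ (r + q)) := by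
    rw [gam1_add_gam2, gam1_mul_gam2 hσ hr.le]
    field_simp at hODE ⊢
    linear_combination (1 / 2 : ℝ) * hODE
  have : 0 < 2 * q / σ ^ 2 * del μ σ r q (bstar μ σ (r + q)) := by positivity
  rw [Nfun, delPP_bstar hσ hrq]
  nlinarith [mul_pos (mul_pos (sub_pos.mpr (hg2.trans hg1)) hD) this]

lemma Nfun_mul_sub_Nfun_mul (μ σ r q y z : ℝ) :
    Nfun μ σ r q y * (psiF μ σ (r + q) z * phiF μ σ (r + q) z) -
        Nfun μ σ r q z * (psiF μ σ (r + q) y * phiF μ σ (r + q) y) =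
      (psiF μ σ (r + q) y * phiF μ σ (r + q) z - psiF μ σ (r + q) z * phiF μ σ (r + q) y) *
        ((gam1 μ σ r - gam2 μ σ r) * gam1 μ σ (r + q) * (gam1 μ σ (r + q) - gam1 μ σ r) *
            (gam1 μ σ (r + q) - gam2 μ σ r) * psiF μ σ (r + q) y * psiF μ σ (r + q) z -
          (gam1 μ σ r - gam2 μ σ r) * gam2 μ σ (r + q) * (gam2 μ σ r - gam2 μ σ (r + q)) *
            (gam1 μ σ r - gam2 μ σ (r + q)) * phiF μ σ (r + q) y * phiF μ σ (r + q) z) := by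
  simp only [Nfun, delPP, delP, del, psiF, phiF]
  ring

lemma Nfun_pos (hμ : 0 < μ) (hσ : σ ≠ 0) (hr : 0 < r) (hq : 0 < q) {y : ℝ}
    (hy : bstar μ σ (r + q) ≤ y) : 0 < Nfun μ σ r q y := by
  have hrq := add_pos hr hq
  have hg1 := gam1_pos (μ := μ) hσ hr
  have hg2 := gam2_neg (μ := μ) hσ hr
  have ha1 := gam1_lt_gam1 (μ := μ) hσ hr.le (lt_add_of_pos_right r hq)
  have ha2 := gam2_lt_gam2 (μ := μ) hσ hr.le (lt_add_of_pos_right r hq)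
  have hb := Nfun_bstar_pos hμ hσ hr hq
  have hid := Nfun_mul_sub_Nfun_mul μ σ r q y (bstar μ σ (r + q))
  have hmono : psiF μ σ (r + q) (bstar μ σ (r + q)) * phiF μ σ (r + q) y ≤
      psiF μ σ (r + q) y * phiF μ σ (r + q) (bstar μ σ (r + q)) := by
    simp only [psiF, phiF, ← Real.exp_add]
    exact Real.exp_le_exp.mpr (by nlinarith)
  have hA : 0 < (gam1 μ σ r - gam2 μ σ r) * gam1 μ σ (r + q) * (gam1 μ σ (r + q) - gam1 μ σ r) *
      (gam1 μ σ (r + q) - gam2 μ σ r) :=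
    mul_pos (mul_pos (mul_pos (sub_pos.mpr (hg2.trans hg1)) (gam1_pos hσ hrq)) (sub_pos.mpr ha1))
      (sub_pos.mpr (hg2.trans (hg1.trans ha1)))
  have hC : (gam1 μ σ r - gam2 μ σ r) * gam2 μ σ (r + q) * (gam2 μ σ r - gam2 μ σ (r + q)) *
      (gam1 μ σ r - gam2 μ σ (r + q)) < 0 :=
    mul_neg_of_neg_of_pos (mul_neg_of_neg_of_pos
      (mul_neg_of_pos_of_neg (sub_pos.mpr (hg2.trans hg1)) (gam2_neg hσ hrq)) (sub_pos.mpr ha2))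
      (sub_pos.mpr (ha2.trans (hg2.trans hg1)))
  have hψy := Real.exp_pos (gam1 μ σ (r + q) * y)
  have hφy := Real.exp_pos (gam2 μ σ (r + q) * y)
  have hψb := Real.exp_pos (gam1 μ σ (r + q) * bstar μ σ (r + q))
  have hφb := Real.exp_pos (gam2 μ σ (r + q) * bstar μ σ (r + q))
  simp only [psiF, phiF] at hid hmono
  have hfac : 0 < (gam1 μ σ r - gam2 μ σ r) * gam1 μ σ (r + q) * (gam1 μ σ (r + q) - gam1 μ σ r) *
        (gam1 μ σ (r + q) - gam2 μ σ r) * Real.exp (gam1 μ σ (r + q) * y) *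
        Real.exp (gam1 μ σ (r + q) * bstar μ σ (r + q)) -
      (gam1 μ σ r - gam2 μ σ r) * gam2 μ σ (r + q) * (gam2 μ σ r - gam2 μ σ (r + q)) *
        (gam1 μ σ r - gam2 μ σ (r + q)) * Real.exp (gam2 μ σ (r + q) * y) *
        Real.exp (gam2 μ σ (r + q) * bstar μ σ (r + q)) := by
    nlinarith [mul_pos (mul_pos hA hψy) hψb, mul_pos (mul_pos (neg_pos.mpr hC) hφy) hφb]
  have : 0 < Nfun μ σ r q y * (Real.exp (gam1 μ σ (r + q) * bstar μ σ (r + q)) *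
      Real.exp (gam2 μ σ (r + q) * bstar μ σ (r + q))) := by
    nlinarith [mul_nonneg (sub_nonneg.mpr hmono) hfac.le, mul_pos hb (mul_pos hψy hφy)]
  exact pos_of_mul_pos_left this (by positivity)

end Nfun

section AlongBstar

variable {μ σ r q : ℝ}

lemma Hfun_bstar_eq (hσ : σ ≠ 0) (hr : 0 < r) (hq : 0 < q) (y : ℝ) :
    Hfun μ σ r q (bstar μ σ (r + q)) y =
      Gfun μ σ r (delP μ σ r q y - gam2 μ σ r * del μ σ r q y)
        (delP μ σ r q y - gam1 μ σ r * del μ σ r q y) / delP μ σ r q (bstar μ σ (r + q)) := by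
  have hrq := add_pos hr hq
  have hD := inv_pos.mpr (delP_pos (μ := μ) (q := q) hσ hrq (bstar μ σ (r + q)))
  have hP2 := delP_sub_gam2_mul_del_pos (μ := μ) hσ hr hq y
  have hP1 := delP_sub_gam1_mul_del_pos (μ := μ) hσ hr hq y
  have hA : ∀ g, extVDeriv μ σ r q (bstar μ σ (r + q)) y - g * extV μ σ r q (bstar μ σ (r + q)) y =
      (delP μ σ r q (bstar μ σ (r + q)))⁻¹ * (delP μ σ r q y - g * del μ σ r q y) := fun g => by
    rw [extV_bstar hσ hrq, extVDeriv_bstar hσ hrq]; ring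
  rw [Hfun_eq_Gfun hσ hr (by rw [hA]; positivity) (by rw [hA]; positivity), hA, hA,
    Gfun_mul hσ hr hD hP2.le hP1.le, inv_mul_eq_div]

lemma Hfun_bstar_strictMonoOn (hμ : 0 < μ) (hσ : σ ≠ 0) (hr : 0 < r) (hq : 0 < q) :
    StrictMonoOn (fun y => Hfun μ σ r q (bstar μ σ (r + q)) y) (Ici (bstar μ σ (r + q))) := by
  have hD := delP_pos (μ := μ) (q := q) hσ (add_pos hr hq) (bstar μ σ (r + q))
  have hG : StrictMonoOn (fun y => Gfun μ σ r (delP μ σ r q y - gam2 μ σ r * del μ σ r q y)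
      (delP μ σ r q y - gam1 μ σ r * del μ σ r q y)) (Ici (bstar μ σ (r + q))) := by
    refine strictMonoOn_Gfun hσ hr (convex_Ici _)
      (fun y _ => delP_sub_gam2_mul_del_pos hσ hr hq y)
      (fun y _ => delP_sub_gam1_mul_del_pos hσ hr hq y)
      (fun y _ => (hasDerivAt_delP μ σ r q y).sub ((hasDerivAt_del μ σ r q y).const_mul _))
      (fun y _ => (hasDerivAt_delP μ σ r q y).sub ((hasDerivAt_del μ σ r q y).const_mul _))
      (fun y hy => ?_)
    rw [interior_Ici] at hy
    exact Nfun_pos hμ hσ hr hq (le_of_lt hy)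
  intro a ha b hb hab
  simp only [Hfun_bstar_eq hσ hr hq]
  exact div_lt_div_of_pos_right (hG ha hb hab) hD

end AlongBstar

section Diagonal

variable {μ σ r q : ℝ}

lemma gam1_mul_gam2_mul_mu_div (hσ : σ ≠ 0) (hr : 0 < r) :
    gam1 μ σ r * gam2 μ σ r * (μ / r) = gam1 μ σ r + gam2 μ σ r := by
  rw [gam1_mul_gam2 hσ hr.le, gam1_add_gam2]
  field_simp

lemma one_sub_gam2_mul_mu_div (hσ : σ ≠ 0) (hr : 0 < r) :
    1 - gam2 μ σ r * (μ / r) = -gam2 μ σ r / gam1 μ σ r := by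
  have := (gam1_pos (μ := μ) hσ hr).ne'
  rw [eq_div_iff this]
  linear_combination -gam1_mul_gam2_mul_mu_div (μ := μ) hσ hr

lemma one_sub_gam1_mul_mu_div (hσ : σ ≠ 0) (hr : 0 < r) :
    1 - gam1 μ σ r * (μ / r) = -gam1 μ σ r / gam2 μ σ r := by
  have := (gam2_neg (μ := μ) hσ hr).ne
  rw [eq_div_iff this]
  linear_combination -gam1_mul_gam2_mul_mu_div (μ := μ) hσ hr

lemma one_sub_gam_mul_pos (hσ : σ ≠ 0) (hr : 0 < r) {v : ℝ} (hv : v ∈ Icc 0 (μ / r)) :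
    0 < 1 - gam2 μ σ r * v ∧ 0 < 1 - gam1 μ σ r * v := by
  have hg1 := gam1_pos (μ := μ) hσ hr
  have hg2 := gam2_neg (μ := μ) hσ hr
  have := one_sub_gam1_mul_mu_div (μ := μ) hσ hr
  have := div_pos_of_neg_of_neg (neg_neg_of_pos hg1) hg2
  constructor <;> nlinarith [hv.1, hv.2]

lemma Vfun_mem_Icc (hμ : 0 < μ) (hσ : σ ≠ 0) (hr : 0 < r) (hq : 0 < q) {y : ℝ}
    (hy : y ∈ Icc (bstar μ σ (r + q)) (yUpper μ σ r q)) : Vfun μ σ (r + q) y ∈ Icc 0 (μ / r) := by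
  have : 0 < μ / (r + q) := div_pos hμ (add_pos hr hq)
  rw [Vfun_of_bstar_le hσ (add_pos hr hq) hy.1]
  have := hy.2
  rw [yUpper] at this
  constructor <;> linarith [hy.1]

lemma Hfun_self_eq (hμ : 0 < μ) (hσ : σ ≠ 0) (hr : 0 < r) (hq : 0 < q) {y : ℝ}
    (hy : y ∈ Icc (bstar μ σ (r + q)) (yUpper μ σ r q)) :
    Hfun μ σ r q y y =
      Gfun μ σ r (1 - gam2 μ σ r * Vfun μ σ (r + q) y) (1 - gam1 μ σ r * Vfun μ σ (r + q) y) := by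
  have hrq := add_pos hr hq
  have hpos := one_sub_gam_mul_pos hσ hr (Vfun_mem_Icc hμ hσ hr hq hy)
  rw [Hfun_eq_Gfun hσ hr, extV_self hσ hrq, extVDeriv_self hσ hrq] <;>
    rw [extV_self hσ hrq, extVDeriv_self hσ hrq]
  exacts [hpos.1.le, hpos.2.le]

lemma strictMonoOn_Gfun_one_sub (hσ : σ ≠ 0) (hr : 0 < r) :
    StrictMonoOn (fun v => Gfun μ σ r (1 - gam2 μ σ r * v) (1 - gam1 μ σ r * v))
      (Icc 0 (μ / r)) := by
  have hg1 := gam1_pos (μ := μ) hσ hr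
  have hg2 := gam2_neg (μ := μ) hσ hr
  have hderiv : ∀ g v : ℝ, HasDerivAt (fun v => 1 - g * v) (0 - g * 1) v :=
    fun g v => (hasDerivAt_const v 1).sub ((hasDerivAt_id' v).const_mul g)
  refine strictMonoOn_Gfun hσ hr (convex_Icc _ _) (fun v hv => (one_sub_gam_mul_pos hσ hr hv).1)
    (fun v hv => (one_sub_gam_mul_pos hσ hr hv).2) (fun v _ => hderiv _ v) (fun v _ => hderiv _ v)
    (fun v hv => ?_)
  rw [interior_Icc] at hv
  have hexpr : -gam2 μ σ r * (0 - gam2 μ σ r * 1) * (1 - gam1 μ σ r * v) +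
      gam1 μ σ r * (0 - gam1 μ σ r * 1) * (1 - gam2 μ σ r * v) =
      (gam1 μ σ r - gam2 μ σ r) * -(gam1 μ σ r * gam2 μ σ r) * (μ / r - v) := by
    linear_combination (gam1 μ σ r - gam2 μ σ r) * gam1_mul_gam2_mul_mu_div (μ := μ) hσ hr
  rw [hexpr]
  exact mul_pos (mul_pos (by linarith) (neg_pos.mpr (mul_neg_of_pos_of_neg hg1 hg2)))
    (sub_pos.mpr hv.2)

lemma Hfun_self_strictMonoOn (hμ : 0 < μ) (hσ : σ ≠ 0) (hr : 0 < r) (hq : 0 < q) :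
    StrictMonoOn (fun y => Hfun μ σ r q y y) (Icc (bstar μ σ (r + q)) (yUpper μ σ r q)) := by
  intro a ha b hb hab
  simp only [Hfun_self_eq hμ hσ hr hq ha, Hfun_self_eq hμ hσ hr hq hb]
  refine strictMonoOn_Gfun_one_sub hσ hr (Vfun_mem_Icc hμ hσ hr hq ha)
    (Vfun_mem_Icc hμ hσ hr hq hb) ?_
  rw [Vfun_of_bstar_le hσ (add_pos hr hq) ha.1, Vfun_of_bstar_le hσ (add_pos hr hq) hb.1]
  linarith

lemma bstar_le_yUpper (hμ : 0 < μ) (hr : 0 < r) (hq : 0 < q) :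
    bstar μ σ (r + q) ≤ yUpper μ σ r q := by
  have : μ / (r + q) ≤ μ / r := div_le_div_of_nonneg_left hμ.le hr (by linarith)
  rw [yUpper]
  linarith

lemma Hfun_yUpper (hμ : 0 < μ) (hσ : σ ≠ 0) (hr : 0 < r) (hq : 0 < q) :
    Hfun μ σ r q (yUpper μ σ r q) (yUpper μ σ r q) = 1 := by
  have hb := bstar_le_yUpper (σ := σ) hμ hr hq
  rw [Hfun_self_eq hμ hσ hr hq ⟨hb, le_rfl⟩, Vfun_of_bstar_le hσ (add_pos hr hq) hb,
    show μ / (r + q) + yUpper μ σ r q - bstar μ σ (r + q) = μ / r by rw [yUpper]; ring,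
    one_sub_gam2_mul_mu_div hσ hr, one_sub_gam1_mul_mu_div hσ hr, Gfun_neg_div hσ hr]

end Diagonal

theorem stmt18_general (μ σ r q : ℝ) (hμ : 0 < μ) (hσ : 0 < σ) (hr : 0 < r) (hq : 0 < q)
    (yl : ℝ) (hylf : fF μ σ r q yl = 0)
    (hylb : yl ∈ Set.Ioo (bstar μ σ (r+q)) (yUpper μ σ r q)) :
    Hfun μ σ r q (bstar μ σ (r+q)) yl = 1 ∧
    Hfun μ σ r q (yUpper μ σ r q) (yUpper μ σ r q) = 1 ∧
    StrictMonoOn (fun y => Hfun μ σ r q (bstar μ σ (r+q)) y) (Set.Ioo yl (yUpper μ σ r q)) ∧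
    StrictMonoOn (fun y => Hfun μ σ r q y y) (Set.Ioo yl (yUpper μ σ r q)) := by
  have hσ' := hσ.ne'
  have hD := delP_pos (μ := μ) (q := q) hσ' (add_pos hr hq) (bstar μ σ (r + q))
  have hGl := sub_eq_zero.mp ((fF_eq hσ' hr hq yl).symm.trans hylf)
  refine ⟨?_, Hfun_yUpper hμ hσ' hr hq, ?_, ?_⟩
  · rw [Hfun_bstar_eq hσ' hr hq, hGl, div_self hD.ne']
  · exact (Hfun_bstar_strictMonoOn hμ hσ' hr hq).mono fun y hy => (hylb.1.trans hy.1).le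
  · exact (Hfun_self_strictMonoOn hμ hσ' hr hq).mono fun y hy => ⟨(hylb.1.trans hy.1).le, hy.2.le⟩

/-- `H(b*_{r+q}, y_l) = 1`, `H(y_u, y_u) = 1`, and the maps
`y ↦ H(b*_{r+q}, y)` and `y ↦ H(y,y)` are strictly increasing on `(y_l, y_u)`. -/
theorem stmt18 (μ σ r q : ℝ) (hμ : 0 < μ) (hσ : 0 < σ) (hr : 0 < r) (hq : 0 < q)
    (yl : ℝ) (hyl : yl ∈ Set.Ioo 0 (yUpper μ σ r q)) (hylf : fF μ σ r q yl = 0)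
    (hyluniq : ∀ y ∈ Set.Ioo 0 (yUpper μ σ r q), fF μ σ r q y = 0 → y = yl)
    (hylb : yl ∈ Set.Ioo (bstar μ σ (r+q)) (yUpper μ σ r q)) :
    Hfun μ σ r q (bstar μ σ (r+q)) yl = 1 ∧
    Hfun μ σ r q (yUpper μ σ r q) (yUpper μ σ r q) = 1 ∧
    StrictMonoOn (fun y => Hfun μ σ r q (bstar μ σ (r+q)) y) (Set.Ioo yl (yUpper μ σ r q)) ∧
    StrictMonoOn (fun y => Hfun μ σ r q y y) (Set.Ioo yl (yUpper μ σ r q)) :=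
  stmt18_general μ σ r q hμ hσ hr hq yl hylf hylb
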